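/- arXiv:2010.11151 — 2 statements merged into one kernel-verified Lean document; each statement's English description precedes it below -/
import Mathlib

section
/- Strong duality holds for the Q-REPS optimization problem: the maximum of ⟨p,r⟩ − (1/η)·D(p‖p₀) − (1/α)·H(d‖d₀) over probability distributions p, d on 𝒳×𝒜 satisfying Σ_a d(x,a) = γ·Σ_{x',a'} P(x|x',a')·p(x',a') + (1−γ)·ν₀(x) for all x and Σ_{x,a} d(x,a)·φ(x,a) = Σ_{x,a} p(x,a)·φ(x,a), equals the minimum over θ ∈ ℝ^m of the logistic Bellman error G(θ) = (1/η)·log(Σ_{x,a} p₀(x,a)·e^{η·Δ_θ(x,a)}) + (1−γ)·Σ_x ν₀(x)·V_θ(x). -/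
/-!
Weak duality: on a feasible pair `(p, d)` the constraints turn the objective into the Lagrangian
with multipliers `(V_θ, θ)`, and the Gibbs variational inequality, applied to `p` and to each row
of `d`, bounds that Lagrangian by `G θ`.

Strong duality: the objective is concave and continuous on the compact product of simplices and
the constraints are linear, so separating `(0, sup + ε)` from the image of the hypograph yields
multipliers `(V, θ)` whose Lagrangian stays below `sup + ε` on the whole product of simplices.
Evaluated at the Gibbs distribution of the Bellman error of `V` and at a Gibbs policy concentrated
on a state maximizing `V_θ - V`, the Lagrangian is at least `G θ`, because `G` is monotone in the
value function and commutes with adding constants. A feasible pair exists: the discounted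
occupancy measure of any policy is feasible.
-/

open Real Finset
open scoped Matrix

theorem csSup_eq_csInf_of_forall_exists_lt {S T : Set ℝ} (hS : S.Nonempty) (hT : T.Nonempty)
    (hle : ∀ s ∈ S, ∀ t ∈ T, s ≤ t) (hgap : ∀ b, (∀ s ∈ S, s < b) → ∃ t ∈ T, t < b) :
    sSup S = sInf T := by
  have hST : sSup S ≤ sInf T := csSup_le hS fun s hs => le_csInf hT fun t ht => hle s hs t ht
  refine hST.antisymm (not_lt.1 fun hlt => ?_)
  obtain ⟨t, ht, hts⟩ := hgap (sInf T) fun s hs =>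
    (le_csSup ⟨_, fun s hs => hle s hs _ hT.some_mem⟩ hs).trans_lt hlt
  exact hts.not_ge (csInf_le ⟨_, fun t ht => hle _ hS.some_mem t ht⟩ ht)

theorem isClosed_setOf_exists_hypograph {E F : Type*} [TopologicalSpace E] [TopologicalSpace F]
    [T2Space F] {K : Set E} (hK : IsCompact K) {f : E → ℝ} (hfc : ContinuousOn f K) {g : E → F}
    (hg : Continuous g) : IsClosed {z : F × ℝ | ∃ x ∈ K, g x = z.1 ∧ z.2 ≤ f x} := by
  have : CompactSpace K := isCompact_iff_compactSpace.mp hK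
  have hZ : IsClosed {w : K × (F × ℝ) | g w.1 = w.2.1 ∧ w.2.2 ≤ f w.1} :=
    (isClosed_eq (by fun_prop) (by fun_prop)).inter
      (isClosed_le (by fun_prop) (hfc.domRestrict.comp continuous_fst))
  convert isClosedMap_snd_of_compactSpace _ hZ using 1
  ext z
  simp only [Set.mem_ofPred_eq, Set.mem_image, Prod.exists, Subtype.exists]
  aesop

section LagrangeDuality

variable {E F : Type*} [AddCommGroup E] [Module ℝ E] [AddCommGroup F] [Module ℝ F]

theorem convex_setOf_exists_hypograph {K : Set E} {f : E → ℝ} (hf : ConcaveOn ℝ K f)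
    (R : E →ₗ[ℝ] F) (c : F) : Convex ℝ {z : F × ℝ | ∃ x ∈ K, R x - c = z.1 ∧ z.2 ≤ f x} := by
  rintro ⟨-, t₁⟩ ⟨x₁, hx₁, rfl, ht₁ : t₁ ≤ f x₁⟩ ⟨-, t₂⟩ ⟨x₂, hx₂, rfl, ht₂ : t₂ ≤ f x₂⟩
    s t hs ht hst
  refine ⟨s • x₁ + t • x₂, hf.1 hx₁ hx₂ hs ht hst, ?_, ?_⟩
  · obtain rfl : t = 1 - s := by linarith
    simp only [map_add, map_smul, Prod.fst_add, Prod.smul_fst]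
    module
  · calc s * t₁ + t * t₂ ≤ s • f x₁ + t • f x₂ := by
          simp only [smul_eq_mul]
          gcongr
      _ ≤ f (s • x₁ + t • x₂) := hf.2 hx₁ hx₂ hs ht hst

variable [TopologicalSpace E] [TopologicalSpace F] [T2Space F] [IsTopologicalAddGroup F]
  [ContinuousSMul ℝ F] [LocallyConvexSpace ℝ F]

theorem exists_lagrangeMultiplier_of_concaveOn {K : Set E} (hK : IsCompact K) {f : E → ℝ}
    (hf : ConcaveOn ℝ K f) (hfc : ContinuousOn f K) (R : E →ₗ[ℝ] F) (hR : Continuous R) (c : F)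
    (hfeas : ∃ x ∈ K, R x = c) {b : ℝ} (hb : ∀ x ∈ K, R x = c → f x < b) :
    ∃ ℓ : StrongDual ℝ F, ∀ x ∈ K, f x + ℓ (R x - c) < b := by
  set C : Set (F × ℝ) := {z | ∃ x ∈ K, R x - c = z.1 ∧ z.2 ≤ f x}
  have hbC : ((0 : F), b) ∉ C := by
    rintro ⟨x, hx, hRx, hbx⟩
    exact (hb x hx (sub_eq_zero.mp hRx)).not_ge hbx
  obtain ⟨ℓ, u, hℓb, hℓC⟩ := geometric_hahn_banach_point_closed
    (convex_setOf_exists_hypograph hf R c)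
    (isClosed_setOf_exists_hypograph hK hfc (hR.sub continuous_const)) hbC
  have hsplit : ∀ y t, ℓ (y, t) = ℓ (y, 0) + t * ℓ (0, 1) := fun y t => by
    rw [← smul_eq_mul, ← map_smul, ← map_add]
    simp
  have hvert : ∀ t, ℓ (0, t) = t * ℓ (0, 1) := fun t => by
    rw [hsplit, Prod.mk_zero_zero, map_zero, zero_add]
  -- the separating hyperplane is not vertical, because a feasible point lies below `(0, b)`
  have hτ : ℓ (0, 1) < 0 := by
    obtain ⟨x₀, hx₀, hRx₀⟩ := hfeas
    set t := min (f x₀) (b - 1)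
    have hC : ((0 : F), t) ∈ C := ⟨x₀, hx₀, sub_eq_zero.mpr hRx₀, min_le_left _ _⟩
    have h := hℓb.trans (hℓC _ hC)
    rw [hvert b, hvert t] at h
    nlinarith [min_le_right (f x₀) (b - 1)]
  refine ⟨(ℓ (0, 1))⁻¹ • ℓ.comp (ContinuousLinearMap.inl ℝ F ℝ), fun x hx => ?_⟩
  have h := hℓb.trans (hℓC (R x - c, f x) ⟨x, hx, rfl, le_rfl⟩)
  rw [hvert b, hsplit (R x - c) (f x)] at h
  have h' : ℓ (R x - c, 0) / ℓ (0, 1) < b - f x := by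
    rw [div_lt_iff_of_neg hτ]
    linarith
  simpa [div_eq_inv_mul, ← lt_sub_iff_add_lt'] using h'

end LagrangeDuality

section Stationary

variable {X : Type*} [Fintype X] {M : Matrix X X ℝ}

theorem sum_mulVec_of_sum_col_eq_one (hM1 : ∀ y, ∑ x, M x y = 1) (v : X → ℝ) :
    ∑ x, (M *ᵥ v) x = ∑ x, v x := by
  simp only [Matrix.mulVec, dotProduct]
  rw [Finset.sum_comm]
  simp [← Finset.sum_mul, hM1]

theorem sum_abs_mulVec_le (hM0 : ∀ x y, 0 ≤ M x y) (hM1 : ∀ y, ∑ x, M x y = 1) (v : X → ℝ) :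
    ∑ x, |(M *ᵥ v) x| ≤ ∑ x, |v x| := by
  calc ∑ x, |(M *ᵥ v) x| ≤ ∑ x, (M *ᵥ (fun y => |v y|)) x := by
        gcongr with x
        refine (abs_sum_le_sum_abs _ _).trans_eq (Finset.sum_congr rfl fun y _ => ?_)
        rw [abs_mul, abs_of_nonneg (hM0 x y)]
    _ = ∑ x, |v x| := sum_mulVec_of_sum_col_eq_one hM1 _

theorem sum_abs_smul_mulVec_le (hM0 : ∀ x y, 0 ≤ M x y) (hM1 : ∀ y, ∑ x, M x y = 1) {γ : ℝ}
    (hγ0 : 0 ≤ γ) (v : X → ℝ) : ∑ x, |(γ • M *ᵥ v) x| ≤ γ * ∑ x, |v x| := by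
  simp only [Pi.smul_apply, smul_eq_mul, abs_mul, abs_of_nonneg hγ0, ← Finset.mul_sum]
  exact mul_le_mul_of_nonneg_left (sum_abs_mulVec_le hM0 hM1 v) hγ0

theorem eq_zero_of_eq_smul_mulVec (hM0 : ∀ x y, 0 ≤ M x y) (hM1 : ∀ y, ∑ x, M x y = 1) {γ : ℝ}
    (hγ0 : 0 ≤ γ) (hγ1 : γ < 1) {v : X → ℝ} (hv : v = γ • M *ᵥ v) : v = 0 := by
  have h := sum_abs_smul_mulVec_le hM0 hM1 hγ0 v
  rw [← hv] at h
  have hv0 : ∑ x, |v x| = 0 :=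
    le_antisymm (by nlinarith [Finset.sum_nonneg fun x (_ : x ∈ univ) => abs_nonneg (v x)])
      (Finset.sum_nonneg fun x _ => abs_nonneg (v x))
  funext x
  exact abs_eq_zero.mp ((Finset.sum_eq_zero_iff_of_nonneg fun y _ => abs_nonneg (v y)).mp hv0 x
    (mem_univ x))

theorem exists_discounted_stationary (hM0 : ∀ x y, 0 ≤ M x y) (hM1 : ∀ y, ∑ x, M x y = 1)
    {γ : ℝ} (hγ0 : 0 ≤ γ) (hγ1 : γ < 1) {ν : X → ℝ} (hν0 : ∀ x, 0 ≤ ν x) (hν1 : ∑ x, ν x = 1) :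
    ∃ μ : X → ℝ, (∀ x, 0 ≤ μ x) ∧ ∑ x, μ x = 1 ∧ μ = γ • M *ᵥ μ + (1 - γ) • ν := by
  set L : (X → ℝ) →ₗ[ℝ] X → ℝ := LinearMap.id - γ • M.mulVecLin with hL
  have hinj : Function.Injective L := by
    rw [← LinearMap.ker_eq_bot, LinearMap.ker_eq_bot']
    exact fun v hv => eq_zero_of_eq_smul_mulVec hM0 hM1 hγ0 hγ1
      (sub_eq_zero.mp (by simpa [hL] using hv))
  obtain ⟨μ, hμ⟩ := LinearMap.injective_iff_surjective.mp hinj ((1 - γ) • ν)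
  replace hμ : μ = γ • M *ᵥ μ + (1 - γ) • ν := by
    rw [← hμ, hL]
    simp
  have hsum : ∑ x, μ x = 1 := by
    have h := congrArg (fun w => ∑ x, w x) hμ
    simp only [Pi.add_apply, Pi.smul_apply, smul_eq_mul, Finset.sum_add_distrib,
      ← Finset.mul_sum, sum_mulVec_of_sum_col_eq_one hM1, hν1] at h
    nlinarith
  -- `Σ |μ| ≤ 1 = Σ μ` forces `μ ≥ 0`
  have habs : ∑ x, |μ x| ≤ γ * ∑ x, |μ x| + (1 - γ) := by
    calc ∑ x, |μ x| = ∑ x, |(γ • M *ᵥ μ) x + ((1 - γ) • ν) x| := by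
          conv_lhs => rw [hμ]
          rfl
      _ ≤ ∑ x, (|(γ • M *ᵥ μ) x| + (1 - γ) * ν x) := by
          gcongr with x
          refine (abs_add_le _ _).trans_eq (congrArg _ ?_)
          rw [Pi.smul_apply, smul_eq_mul, abs_mul, abs_of_nonneg (by linarith),
            abs_of_nonneg (hν0 x)]
      _ ≤ γ * ∑ x, |μ x| + (1 - γ) := by
          rw [Finset.sum_add_distrib, ← Finset.mul_sum, hν1, mul_one]
          linarith [sum_abs_smul_mulVec_le hM0 hM1 hγ0 μ]
  refine ⟨μ, fun x => ?_, hsum, hμ⟩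
  have hμx := (Finset.sum_eq_sum_iff_of_le fun y _ => le_abs_self (μ y)).mp
    (le_antisymm (Finset.sum_le_sum fun y _ => le_abs_self _) (by nlinarith)) x (mem_univ x)
  exact hμx ▸ abs_nonneg _

end Stationary

theorem mul_log_div_of_imp {a b : ℝ} (h : b = 0 → a = 0) :
    a * log (a / b) = a * log a - a * log b := by
  rcases eq_or_ne a 0 with rfl | ha
  · simp
  rw [log_div ha (mt h ha)]
  ring

theorem mul_log_div_add_le {a b u₁ u₂ v₁ v₂ : ℝ} (ha : 0 ≤ a) (hb : 0 ≤ b) (hu₁ : 0 ≤ u₁)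
    (hu₂ : 0 ≤ u₂) (hv₁ : 0 ≤ v₁) (hv₂ : 0 ≤ v₂) (h₁ : v₁ = 0 → u₁ = 0) (h₂ : v₂ = 0 → u₂ = 0) :
    (a * u₁ + b * u₂) * log ((a * u₁ + b * u₂) / (a * v₁ + b * v₂))
      ≤ a * (u₁ * log (u₁ / v₁)) + b * (u₂ * log (u₂ / v₂)) := by
  set V := a * v₁ + b * v₂
  have hcancel₁ : v₁ * (u₁ / v₁) = u₁ := mul_div_cancel_of_imp' h₁
  have hcancel₂ : v₂ * (u₂ / v₂) = u₂ := mul_div_cancel_of_imp' h₂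
  rcases (show 0 ≤ V by positivity).eq_or_lt with hV | hV
  · have hau : a * u₁ = 0 := by
      rcases mul_eq_zero.mp (show a * v₁ = 0 by nlinarith [mul_nonneg ha hv₁, mul_nonneg hb hv₂])
        with h | h <;> simp [h, h₁]
    have hbu : b * u₂ = 0 := by
      rcases mul_eq_zero.mp (show b * v₂ = 0 by nlinarith [mul_nonneg ha hv₁, mul_nonneg hb hv₂])
        with h | h <;> simp [h, h₂]
    simp [hau, hbu, ← mul_assoc]
  -- convexity of `t ↦ t log t` at `u₁ / v₁, u₂ / v₂` with weights `a v₁ / V, b v₂ / V`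
  have hconv := convexOn_mul_log.2 (Set.mem_Ici.mpr (div_nonneg hu₁ hv₁))
    (Set.mem_Ici.mpr (div_nonneg hu₂ hv₂)) (by positivity : 0 ≤ a * v₁ / V)
    (by positivity : 0 ≤ b * v₂ / V) (by rw [← add_div]; exact div_self hV.ne')
  simp only [smul_eq_mul] at hconv
  have hmix : a * v₁ / V * (u₁ / v₁) + b * v₂ / V * (u₂ / v₂) = (a * u₁ + b * u₂) / V := by
    rw [div_mul_eq_mul_div, div_mul_eq_mul_div, mul_comm a v₁, mul_comm b v₂, mul_assoc,
      mul_assoc, mul_left_comm, hcancel₁, mul_left_comm, hcancel₂, ← add_div]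
  rw [hmix] at hconv
  calc (a * u₁ + b * u₂) * log ((a * u₁ + b * u₂) / V)
      = V * ((a * u₁ + b * u₂) / V * log ((a * u₁ + b * u₂) / V)) := by
        field_simp
    _ ≤ V * (a * v₁ / V * (u₁ / v₁ * log (u₁ / v₁)) + b * v₂ / V * (u₂ / v₂ * log (u₂ / v₂))) :=
        mul_le_mul_of_nonneg_left hconv hV.le
    _ = a * ((v₁ * (u₁ / v₁)) * log (u₁ / v₁)) + b * ((v₂ * (u₂ / v₂)) * log (u₂ / v₂)) := by
        field_simp
    _ = a * (u₁ * log (u₁ / v₁)) + b * (u₂ * log (u₂ / v₂)) := by rw [hcancel₁, hcancel₂]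

theorem mul_log_div_le_sub {w g : ℝ} (hw : 0 ≤ w) (hg : 0 < g) : w * log (g / w) ≤ g - w := by
  rcases hw.eq_or_lt with rfl | hw
  · simpa using hg.le
  calc w * log (g / w) ≤ w * (g / w - 1) :=
        mul_le_mul_of_nonneg_left (log_le_sub_one_of_pos (div_pos hg hw)) hw.le
    _ = g - w := by field_simp

section Gibbs

variable {ι : Type*} [Fintype ι]

noncomputable def gibbs (q f : ι → ℝ) (i : ι) : ℝ := q i * exp (f i) / ∑ j, q j * exp (f j)

variable {q : ι → ℝ}

theorem sum_mul_exp_pos [Nonempty ι] (hq : ∀ i, 0 < q i) (f : ι → ℝ) :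
    0 < ∑ i, q i * exp (f i) :=
  Finset.sum_pos (fun i _ => mul_pos (hq i) (exp_pos _)) univ_nonempty

theorem gibbs_pos [Nonempty ι] (hq : ∀ i, 0 < q i) (f : ι → ℝ) (i : ι) : 0 < gibbs q f i :=
  div_pos (mul_pos (hq i) (exp_pos _)) (sum_mul_exp_pos hq f)

theorem sum_gibbs [Nonempty ι] (hq : ∀ i, 0 < q i) (f : ι → ℝ) : ∑ i, gibbs q f i = 1 := by
  simp only [gibbs, ← Finset.sum_div]
  exact div_self (sum_mul_exp_pos hq f).ne'

theorem gibbs_variational_le {β : ℝ} (hβ : 0 < β) (hq : ∀ i, 0 < q i) (f : ι → ℝ) {w : ι → ℝ}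
    (hw : ∀ i, 0 ≤ w i) :
    ∑ i, w i * f i - (1 / β) * ∑ i, w i * log ((w i / ∑ j, w j) / q i)
      ≤ (∑ i, w i) * ((1 / β) * log (∑ i, q i * exp (β * f i))) := by
  rcases isEmpty_or_nonempty ι with hι | hι
  · simp
  set s := ∑ j, w j with hs
  set Z := ∑ i, q i * exp (β * f i)
  set L := ∑ i, w i * log ((w i / s) / q i)
  have hZ : 0 < Z := sum_mul_exp_pos hq _
  -- `g` is the Gibbs distribution rescaled to the mass of `w`; then `log y ≤ y - 1` termwise
  set g : ι → ℝ := fun i => s * (q i * exp (β * f i) / Z)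
  have hterm : ∀ i, β * (w i * f i) - w i * log ((w i / s) / q i) - w i * log Z ≤ g i - w i := by
    intro i
    have hqi := hq i
    have hs0 : 0 ≤ s := Finset.sum_nonneg fun j _ => hw j
    rcases (hw i).eq_or_lt with hwi | hwi
    · simp only [← hwi, zero_mul, mul_zero, sub_zero, g]
      positivity
    have hs : 0 < s := hwi.trans_le (Finset.single_le_sum (fun j _ => hw j) (mem_univ i))
    calc β * (w i * f i) - w i * log ((w i / s) / q i) - w i * log Z
        = w i * log (g i / w i) := by
          simp only [g]
          rw [log_div (by positivity) hwi.ne', log_mul hs.ne' (by positivity),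
            log_div (by positivity) hZ.ne', log_mul hqi.ne' (exp_pos _).ne', log_exp,
            log_div (div_pos hwi hs).ne' hqi.ne', log_div hwi.ne' hs.ne']
          ring
      _ ≤ g i - w i := mul_log_div_le_sub hwi.le (by positivity)
  have hg : ∑ i, g i = s := by
    have : (∑ i, q i * exp (β * f i)) / Z = 1 := div_self hZ.ne'
    simp only [g, ← Finset.mul_sum, ← Finset.sum_div, this, mul_one]
  have hsum := Finset.sum_le_sum fun i (_ : i ∈ univ) => hterm i
  simp only [Finset.sum_sub_distrib, ← Finset.mul_sum, ← Finset.sum_mul, hg, ← hs] at hsum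
  rw [← sub_nonneg]
  have key : s * ((1 / β) * log Z) - (∑ i, w i * f i - (1 / β) * L)
      = (1 / β) * (s * log Z - (β * ∑ i, w i * f i - L)) := by
    field_simp
  rw [key]
  exact mul_nonneg (by positivity) (by linarith)

theorem log_gibbs_div [Nonempty ι] (hq : ∀ i, 0 < q i) (f : ι → ℝ) (i : ι) :
    log (gibbs q f i / q i) = f i - log (∑ j, q j * exp (f j)) := by
  rw [gibbs, mul_div_assoc, mul_div_cancel_left₀ _ (hq i).ne',
    log_div (exp_pos _).ne' (sum_mul_exp_pos hq f).ne', log_exp]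

theorem gibbs_variational_eq [Nonempty ι] {β : ℝ} (hβ : 0 < β) (hq : ∀ i, 0 < q i) (f : ι → ℝ) :
    ∑ i, gibbs q (fun i => β * f i) i * f i - (1 / β) * ∑ i, gibbs q (fun i => β * f i) i *
        log ((gibbs q (fun i => β * f i) i / ∑ j, gibbs q (fun i => β * f i) j) / q i)
      = (1 / β) * log (∑ i, q i * exp (β * f i)) := by
  simp only [sum_gibbs hq, div_one, log_gibbs_div hq, mul_sub, Finset.sum_sub_distrib,
    ← Finset.sum_mul, one_mul, mul_left_comm _ β, ← Finset.mul_sum]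
  field_simp
  ring

end Gibbs

noncomputable section

namespace QREPS

variable {X A : Type*} [Fintype X] [Fintype A]

section Entropy

variable (X A) in
def probSimplex : Set (X → A → ℝ) := {p | (∀ x a, 0 ≤ p x a) ∧ ∑ x, ∑ a, p x a = 1}

theorem convex_probSimplex : Convex ℝ (probSimplex X A) := by
  rintro p ⟨hp0, hp1⟩ q ⟨hq0, hq1⟩ s t hs ht hst
  refine ⟨fun x a => ?_, ?_⟩
  · simp only [Pi.add_apply, Pi.smul_apply, smul_eq_mul]
    have := hp0 x a
    have := hq0 x a
    positivity
  · simp only [Pi.add_apply, Pi.smul_apply, smul_eq_mul, Finset.sum_add_distrib, ← Finset.mul_sum,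
      hp1, hq1, mul_one, hst]

theorem isCompact_probSimplex : IsCompact (probSimplex X A) := by
  have h : probSimplex X A = Function.curry '' stdSimplex ℝ (X × A) := by
    ext p
    simp only [probSimplex, stdSimplex, Set.mem_image, Set.mem_ofPred_eq]
    constructor
    · rintro ⟨h0, h1⟩
      exact ⟨Function.uncurry p, ⟨fun xa => h0 xa.1 xa.2, by rwa [Fintype.sum_prod_type]⟩, rfl⟩
    · rintro ⟨q, ⟨h0, h1⟩, rfl⟩
      exact ⟨fun x a => h0 (x, a), by rwa [Fintype.sum_prod_type] at h1⟩
  rw [h]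
  exact (isCompact_stdSimplex ℝ _).image
    (continuous_pi fun x => continuous_pi fun a => continuous_apply (x, a))

def relEntropy (p q : X → A → ℝ) : ℝ :=
  ∑ x, ∑ a, (p x a * log (p x a / q x a) - p x a + q x a)

/-- `H(d‖d₀)` of the paper depends on `d₀` only through its policy, which is the argument `ρ`. -/
def condRelEntropy (d ρ : X → A → ℝ) : ℝ :=
  ∑ x, ∑ a, d x a * log ((d x a / ∑ a', d x a') / ρ x a)

variable {q ρ : X → A → ℝ}

theorem relEntropy_eq_of_sum_eq {p : X → A → ℝ} (h : ∑ x, ∑ a, p x a = ∑ x, ∑ a, q x a) :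
    relEntropy p q = ∑ x, ∑ a, p x a * log (p x a / q x a) := by
  simp only [relEntropy, Finset.sum_add_distrib, Finset.sum_sub_distrib, h, sub_add_cancel]

theorem continuous_relEntropy (hq : ∀ x a, q x a ≠ 0) : Continuous fun p => relEntropy p q := by
  simp only [relEntropy, mul_log_div_of_imp (fun h => absurd h (hq _ _))]
  fun_prop

theorem convexOn_relEntropy (hq : ∀ x a, 0 < q x a) :
    ConvexOn ℝ (Set.Ici 0) fun p => relEntropy p q := by
  refine ⟨convex_Ici 0, fun p₁ hp₁ p₂ hp₂ s t hs ht hst => ?_⟩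
  simp only [relEntropy, smul_eq_mul, Finset.mul_sum, ← Finset.sum_add_distrib]
  refine Finset.sum_le_sum fun x _ => Finset.sum_le_sum fun a _ => ?_
  have h := mul_log_div_add_le hs ht (hp₁ x a) (hp₂ x a) (hq x a).le (hq x a).le
    (fun h => absurd h (hq x a).ne') (fun h => absurd h (hq x a).ne')
  rw [← add_mul, hst, one_mul] at h
  simp only [Pi.add_apply, Pi.smul_apply, smul_eq_mul]
  linear_combination h - q x a * hst

theorem condRelEntropy_eq (hρ : ∀ x a, ρ x a ≠ 0) {d : X → A → ℝ} (hd : ∀ x a, 0 ≤ d x a) :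
    condRelEntropy d ρ
      = ∑ x, ∑ a, (d x a * log (d x a / ∑ a', d x a') - d x a * log (ρ x a)) := by
  refine Finset.sum_congr rfl fun x _ => Finset.sum_congr rfl fun a _ => ?_
  rcases (hd x a).eq_or_lt with h | h
  · simp [← h]
  have hs : 0 < ∑ a', d x a' := h.trans_le (Finset.single_le_sum (fun a _ => hd x a) (mem_univ a))
  rw [log_div (div_pos h hs).ne' (hρ x a)]
  ring

theorem continuousOn_condRelEntropy (hρ : ∀ x a, ρ x a ≠ 0) :
    ContinuousOn (fun d => condRelEntropy d ρ) (Set.Ici 0) := by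
  refine ContinuousOn.congr (f := fun d : X → A → ℝ => ∑ x, (∑ a, (d x a * log (d x a)
    - d x a * log (ρ x a)) - (∑ a, d x a) * log (∑ a, d x a)))
    (Continuous.continuousOn (by fun_prop)) fun d hd => ?_
  rw [condRelEntropy_eq hρ fun x a => hd x a]
  refine Finset.sum_congr rfl fun x _ => ?_
  have hrow : ∀ a, ∑ a', d x a' = 0 → d x a = 0 := fun a h =>
    (Finset.sum_eq_zero_iff_of_nonneg fun a _ => hd x a).mp h a (mem_univ a)
  simp only [mul_log_div_of_imp (hrow _), Finset.sum_sub_distrib, ← Finset.sum_mul]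
  ring

theorem convexOn_condRelEntropy (hρ : ∀ x a, 0 < ρ x a) :
    ConvexOn ℝ (Set.Ici 0) fun d => condRelEntropy d ρ := by
  refine ⟨convex_Ici 0, fun d₁ hd₁ d₂ hd₂ s t hs ht hst => ?_⟩
  have hd : 0 ≤ s • d₁ + t • d₂ := add_nonneg (smul_nonneg hs hd₁) (smul_nonneg ht hd₂)
  have hne : ∀ x a, ρ x a ≠ 0 := fun x a => (hρ x a).ne'
  simp only [smul_eq_mul, condRelEntropy_eq hne fun x a => hd x a,
    condRelEntropy_eq hne fun x a => hd₁ x a, condRelEntropy_eq hne fun x a => hd₂ x a,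
    Finset.mul_sum, ← Finset.sum_add_distrib]
  refine Finset.sum_le_sum fun x _ => Finset.sum_le_sum fun a _ => ?_
  have hrow : ∀ d : X → A → ℝ, 0 ≤ d → ∑ a', d x a' = 0 → d x a = 0 := fun d hd h =>
    (Finset.sum_eq_zero_iff_of_nonneg fun a _ => hd x a).mp h a (mem_univ a)
  have h := mul_log_div_add_le hs ht (hd₁ x a) (hd₂ x a)
    (Finset.sum_nonneg fun a _ => hd₁ x a) (Finset.sum_nonneg fun a _ => hd₂ x a)
    (hrow d₁ hd₁) (hrow d₂ hd₂)
  simp only [Pi.add_apply, Pi.smul_apply, smul_eq_mul, Finset.sum_add_distrib, ← Finset.mul_sum]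
  linear_combination h

end Entropy

variable {ι : Type*} (P : X → A → X → ℝ) (r : X → A → ℝ) (γ : ℝ) (ν₀ : X → ℝ)
  (φ : X → A → ι → ℝ) (α η : ℝ)
  (p₀ π₀ : X → A → ℝ)

def objective (p d : X → A → ℝ) : ℝ :=
  ∑ x, ∑ a, p x a * r x a - (1 / η) * relEntropy p p₀ - (1 / α) * condRelEntropy d π₀

def IsFeasible (p d : X → A → ℝ) : Prop :=
  (∀ x a, 0 ≤ p x a) ∧ (∑ x, ∑ a, p x a) = 1 ∧
  (∀ x a, 0 ≤ d x a) ∧ (∑ x, ∑ a, d x a) = 1 ∧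
  (∀ x, ∑ a, d x a = γ * (∑ x', ∑ a', P x' a' x * p x' a') + (1 - γ) * ν₀ x) ∧
  (∀ i, (∑ x, ∑ a, d x a * φ x a i) = ∑ x, ∑ a, p x a * φ x a i)

def linearQ [Fintype ι] (θ : ι → ℝ) (x : X) (a : A) : ℝ := ∑ i, θ i * φ x a i

def softValue (Q : X → A → ℝ) (x : X) : ℝ := (1 / α) * log (∑ a, π₀ x a * exp (α * Q x a))

def bellmanError (V : X → ℝ) (Q : X → A → ℝ) (x : X) (a : A) : ℝ :=
  r x a + γ * ∑ x', P x a x' * V x' - Q x a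

def logisticBellmanError (Q : X → A → ℝ) (V : X → ℝ) : ℝ :=
  (1 / η) * log (∑ x, ∑ a, p₀ x a * exp (η * bellmanError P r γ V Q x a))
    + (1 - γ) * ∑ x, ν₀ x * V x

/-- The flow constraint is written as `γ Pᵀ p - Σₐ d = -(1 - γ) ν₀`, so that its Lagrange
multiplier plays the role of a value function. -/
def constraintMap : (X → A → ℝ) × (X → A → ℝ) →ₗ[ℝ] (X ⊕ ι → ℝ) where
  toFun pd := Sum.elim (fun x => γ * ∑ x', ∑ a', P x' a' x * pd.1 x' a' - ∑ a, pd.2 x a)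
    (fun i => ∑ x, ∑ a, pd.2 x a * φ x a i - ∑ x, ∑ a, pd.1 x a * φ x a i)
  map_add' pd pd' := by
    ext (x | i) <;>
    simp only [Prod.fst_add, Prod.snd_add, Pi.add_apply, Sum.elim_inl, Sum.elim_inr, add_mul,
      mul_add, Finset.sum_add_distrib] <;> ring
  map_smul' c pd := by
    ext (x | i) <;>
    simp only [Prod.smul_fst, Prod.smul_snd, Pi.smul_apply, smul_eq_mul, Sum.elim_inl,
      Sum.elim_inr, RingHom.id_apply, mul_assoc, mul_left_comm _ c, ← Finset.mul_sum] <;> ring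

def constraintRhs : X ⊕ ι → ℝ := Sum.elim (fun x => -((1 - γ) * ν₀ x)) 0

def lagrangian (V : X → ℝ) (Q : X → A → ℝ) (p d : X → A → ℝ) : ℝ :=
  (∑ x, ∑ a, p x a * bellmanError P r γ V Q x a - (1 / η) * relEntropy p p₀)
    + (∑ x, ∑ a, d x a * Q x a - (1 / α) * condRelEntropy d π₀)
    - ∑ x, (∑ a, d x a) * V x + (1 - γ) * ∑ x, ν₀ x * V x

theorem sum_mul_sum_transition (p : X → A → ℝ) (V : X → ℝ) :
    ∑ x, V x * ∑ x', ∑ a', P x' a' x * p x' a' = ∑ x, ∑ a, p x a * ∑ x', P x a x' * V x' := by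
  simp only [Finset.mul_sum]
  rw [Finset.sum_comm]
  refine Finset.sum_congr rfl fun x _ => ?_
  rw [Finset.sum_comm]
  exact Finset.sum_congr rfl fun a _ => Finset.sum_congr rfl fun x' _ => by ring

theorem sum_mul_sum_feature [Fintype ι] (g : X → A → ℝ) (θ : ι → ℝ) :
    ∑ i, θ i * ∑ x, ∑ a, g x a * φ x a i = ∑ x, ∑ a, g x a * linearQ φ θ x a := by
  simp only [linearQ, Finset.mul_sum]
  rw [Finset.sum_comm]
  refine Finset.sum_congr rfl fun x _ => ?_
  rw [Finset.sum_comm]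
  exact Finset.sum_congr rfl fun a _ => Finset.sum_congr rfl fun i _ => by ring

theorem objective_add_sum_mul_constraint [Fintype ι] (μ : X ⊕ ι → ℝ) (p d : X → A → ℝ) :
    objective r α η p₀ π₀ p d
        + ∑ j, μ j * (constraintMap P γ φ (p, d) j - constraintRhs γ ν₀ j)
      = lagrangian P r γ ν₀ α η p₀ π₀ (fun x => μ (.inl x)) (linearQ φ fun i => μ (.inr i))
          p d := by
  set V : X → ℝ := fun x => μ (.inl x)
  set θ : ι → ℝ := fun i => μ (.inr i)
  have hflow :
      ∑ x, V x * (constraintMap P γ φ (p, d) (.inl x) - constraintRhs γ ν₀ (.inl x : X ⊕ ι))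
      = γ * ∑ x, ∑ a, p x a * ∑ x', P x a x' * V x' - ∑ x, (∑ a, d x a) * V x
        + (1 - γ) * ∑ x, ν₀ x * V x := by
    simp only [constraintMap, constraintRhs, LinearMap.coe_mk, AddHom.coe_mk, Sum.elim_inl]
    rw [← sum_mul_sum_transition, Finset.mul_sum, Finset.mul_sum, ← Finset.sum_sub_distrib,
      ← Finset.sum_add_distrib]
    exact Finset.sum_congr rfl fun x _ => by ring
  have hfeat : ∑ i, θ i * (constraintMap P γ φ (p, d) (.inr i) - constraintRhs γ ν₀ (.inr i))
      = ∑ x, ∑ a, d x a * linearQ φ θ x a - ∑ x, ∑ a, p x a * linearQ φ θ x a := by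
    simp only [constraintMap, constraintRhs, LinearMap.coe_mk, AddHom.coe_mk, Sum.elim_inr,
      Pi.zero_apply, sub_zero, mul_sub, Finset.sum_sub_distrib, sum_mul_sum_feature]
  have hbell : ∑ x, ∑ a, p x a * bellmanError P r γ V (linearQ φ θ) x a
      = ∑ x, ∑ a, p x a * r x a + γ * ∑ x, ∑ a, p x a * ∑ x', P x a x' * V x'
        - ∑ x, ∑ a, p x a * linearQ φ θ x a := by
    simp only [bellmanError, mul_add, mul_sub, Finset.sum_add_distrib, Finset.sum_sub_distrib,
      mul_left_comm _ γ, ← Finset.mul_sum]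
  rw [Fintype.sum_sum_type, hflow, hfeat, lagrangian, hbell, objective]
  ring

variable {P r γ ν₀ φ α η p₀ π₀}

theorem isFeasible_iff {p d : X → A → ℝ} :
    IsFeasible P γ ν₀ φ p d ↔ (p, d) ∈ probSimplex X A ×ˢ probSimplex X A
      ∧ constraintMap P γ φ (p, d) = constraintRhs γ ν₀ := by
  simp only [IsFeasible, Set.mem_prod, probSimplex, Set.mem_ofPred_eq, funext_iff, Sum.forall,
    constraintMap, constraintRhs, LinearMap.coe_mk, AddHom.coe_mk, Sum.elim_inl, Sum.elim_inr,
    Pi.zero_apply, sub_eq_zero, and_assoc]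
  constructor <;> rintro ⟨h₁, h₂, h₃, h₄, h₅, h₆⟩ <;>
    exact ⟨h₁, h₂, h₃, h₄, fun x => by linarith [h₅ x], h₆⟩

theorem concaveOn_objective (hα : 0 < α) (hη : 0 < η) (hp₀ : ∀ x a, 0 < p₀ x a)
    (hπ₀ : ∀ x a, 0 < π₀ x a) :
    ConcaveOn ℝ (probSimplex X A ×ˢ probSimplex X A)
      fun pd => objective r α η p₀ π₀ pd.1 pd.2 := by
  refine ⟨convex_probSimplex.prod convex_probSimplex, fun pd₁ h₁ pd₂ h₂ s t hs ht hst => ?_⟩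
  have hD := (convexOn_relEntropy hp₀).2 (fun x a => h₁.1.1 x a) (fun x a => h₂.1.1 x a) hs ht hst
  have hH := (convexOn_condRelEntropy hπ₀).2 (fun x a => h₁.2.1 x a) (fun x a => h₂.2.1 x a)
    hs ht hst
  have hlin : ∑ x, ∑ a, (s • pd₁ + t • pd₂).1 x a * r x a
      = s * ∑ x, ∑ a, pd₁.1 x a * r x a + t * ∑ x, ∑ a, pd₂.1 x a * r x a := by
    simp only [Prod.fst_add, Prod.smul_fst, Pi.add_apply, Pi.smul_apply, smul_eq_mul, add_mul,
      Finset.sum_add_distrib, Finset.mul_sum, mul_assoc]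
  simp only [objective, smul_eq_mul, Prod.fst_add, Prod.snd_add, Prod.smul_fst,
    Prod.smul_snd] at hD hH hlin ⊢
  rw [hlin]
  nlinarith [mul_le_mul_of_nonneg_left hD (one_div_pos.2 hη).le,
    mul_le_mul_of_nonneg_left hH (one_div_pos.2 hα).le]

theorem continuousOn_objective (hp₀ : ∀ x a, 0 < p₀ x a) (hπ₀ : ∀ x a, 0 < π₀ x a) :
    ContinuousOn (fun pd => objective r α η p₀ π₀ pd.1 pd.2)
      (probSimplex X A ×ˢ probSimplex X A) := by
  have hD : Continuous fun pd : (X → A → ℝ) × (X → A → ℝ) => relEntropy pd.1 p₀ :=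
    (continuous_relEntropy fun x a => (hp₀ x a).ne').comp continuous_fst
  have hH : ContinuousOn (fun pd : (X → A → ℝ) × (X → A → ℝ) => condRelEntropy pd.2 π₀)
      (probSimplex X A ×ˢ probSimplex X A) :=
    (continuousOn_condRelEntropy fun x a => (hπ₀ x a).ne').comp continuous_snd.continuousOn
      fun pd h => Set.mem_Ici.mpr fun x a => h.2.1 x a
  unfold objective
  fun_prop

theorem sum_mul_sub_relEntropy_le (hη : 0 < η) (hp₀ : ∀ x a, 0 < p₀ x a)
    (hp₀1 : ∑ x, ∑ a, p₀ x a = 1) {p : X → A → ℝ} (hp : p ∈ probSimplex X A) (f : X → A → ℝ) :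
    ∑ x, ∑ a, p x a * f x a - (1 / η) * relEntropy p p₀
      ≤ (1 / η) * log (∑ x, ∑ a, p₀ x a * exp (η * f x a)) := by
  have h := gibbs_variational_le hη (q := Function.uncurry p₀) (fun xa => hp₀ xa.1 xa.2)
    (Function.uncurry f) (w := Function.uncurry p) fun xa => hp.1 xa.1 xa.2
  simp only [Fintype.sum_prod_type, Function.uncurry_apply_pair, hp.2, div_one, one_mul] at h
  rwa [relEntropy_eq_of_sum_eq (hp.2.trans hp₀1.symm)]

theorem exists_sum_mul_sub_relEntropy_eq [Nonempty X] [Nonempty A] (hη : 0 < η)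
    (hp₀ : ∀ x a, 0 < p₀ x a) (hp₀1 : ∑ x, ∑ a, p₀ x a = 1) (f : X → A → ℝ) :
    ∃ p ∈ probSimplex X A, ∑ x, ∑ a, p x a * f x a - (1 / η) * relEntropy p p₀
      = (1 / η) * log (∑ x, ∑ a, p₀ x a * exp (η * f x a)) := by
  have hq : ∀ xa, 0 < Function.uncurry p₀ xa := fun xa => hp₀ xa.1 xa.2
  have hg1 := sum_gibbs hq fun xa => η * Function.uncurry f xa
  have h := gibbs_variational_eq hη hq (Function.uncurry f)
  rw [hg1] at h
  simp only [Fintype.sum_prod_type, Function.uncurry_apply_pair, div_one] at h hg1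
  refine ⟨fun x a => gibbs (Function.uncurry p₀) (fun xa => η * Function.uncurry f xa) (x, a),
    ⟨fun x a => (gibbs_pos hq _ _).le, hg1⟩, ?_⟩
  rwa [relEntropy_eq_of_sum_eq (hg1.trans hp₀1.symm)]

theorem sum_mul_sub_condRelEntropy_le (hα : 0 < α) (hπ₀ : ∀ x a, 0 < π₀ x a)
    {d : X → A → ℝ} (hd : ∀ x a, 0 ≤ d x a) (Q : X → A → ℝ) :
    ∑ x, ∑ a, d x a * Q x a - (1 / α) * condRelEntropy d π₀
      ≤ ∑ x, (∑ a, d x a) * softValue α π₀ Q x := by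
  rw [condRelEntropy, Finset.mul_sum, ← Finset.sum_sub_distrib]
  exact Finset.sum_le_sum fun x _ => gibbs_variational_le hα (hπ₀ x) (Q x) (hd x)

theorem exists_sum_mul_sub_condRelEntropy_eq [Nonempty A] (hα : 0 < α)
    (hπ₀ : ∀ x a, 0 < π₀ x a) (Q : X → A → ℝ) (V : X → ℝ) (x₀ : X) :
    ∃ d ∈ probSimplex X A, ∑ x, ∑ a, d x a * Q x a - (1 / α) * condRelEntropy d π₀
        - ∑ x, (∑ a, d x a) * V x = softValue α π₀ Q x₀ - V x₀ := by
  classical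
  have hpos := gibbs_pos (hπ₀ x₀) fun a => α * Q x₀ a
  have hg1 := sum_gibbs (hπ₀ x₀) fun a => α * Q x₀ a
  have h := gibbs_variational_eq hα (hπ₀ x₀) (Q x₀)
  rw [hg1] at h
  generalize gibbs (π₀ x₀) (fun a => α * Q x₀ a) = g at hpos hg1 h
  set d : X → A → ℝ := Pi.single x₀ g with hd
  have hsingle : ∀ F : X → (A → ℝ) → ℝ, (∀ x, F x 0 = 0) → ∑ x, F x (d x) = F x₀ g :=
    fun F hF => by
      rw [Fintype.sum_eq_single x₀ fun x hx => by rw [hd, Pi.single_eq_of_ne hx, hF], hd,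
        Pi.single_eq_same]
  refine ⟨d, ⟨fun x a => ?_, ?_⟩, ?_⟩
  · rcases eq_or_ne x x₀ with rfl | hx
    · simpa [hd] using (hpos a).le
    · simp [hd, Pi.single_eq_of_ne hx]
  · rw [hsingle (fun _ h => ∑ a, h a) fun _ => by simp, hg1]
  · rw [condRelEntropy, hsingle (fun x h => ∑ a, h a * Q x a) fun _ => by simp,
      hsingle (fun x h => ∑ a, h a * log ((h a / ∑ a', h a') / π₀ x a)) fun _ => by simp,
      hsingle (fun x h => (∑ a, h a) * V x) fun _ => by simp, hg1, one_mul, softValue]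
    linarith

theorem logisticBellmanError_le_add [Nonempty X] [Nonempty A] (hP0 : ∀ x a x', 0 ≤ P x a x')
    (hP1 : ∀ x a, ∑ x', P x a x' = 1) (hγ0 : 0 ≤ γ) (hγ1 : γ ≤ 1) (hν₀0 : ∀ x, 0 ≤ ν₀ x)
    (hν₀1 : ∑ x, ν₀ x = 1) (hη : 0 < η) (hp₀ : ∀ x a, 0 < p₀ x a) (Q : X → A → ℝ)
    {V V' : X → ℝ} {c : ℝ} (h : ∀ x, V' x ≤ V x + c) :
    logisticBellmanError P r γ ν₀ η p₀ Q V' ≤ logisticBellmanError P r γ ν₀ η p₀ Q V + c := by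
  have hbell : ∀ x a, bellmanError P r γ V' Q x a ≤ bellmanError P r γ V Q x a + γ * c := by
    intro x a
    have : ∑ x', P x a x' * V' x' ≤ ∑ x', P x a x' * V x' + c := by
      calc ∑ x', P x a x' * V' x' ≤ ∑ x', P x a x' * (V x' + c) :=
            Finset.sum_le_sum fun x' _ => mul_le_mul_of_nonneg_left (h x') (hP0 x a x')
        _ = ∑ x', P x a x' * V x' + c := by
            simp only [mul_add, Finset.sum_add_distrib, ← Finset.sum_mul, hP1, one_mul]
    simp only [bellmanError]
    nlinarith
  have hZ : ∑ x, ∑ a, p₀ x a * exp (η * bellmanError P r γ V' Q x a)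
      ≤ exp (η * (γ * c)) * ∑ x, ∑ a, p₀ x a * exp (η * bellmanError P r γ V Q x a) := by
    simp only [Finset.mul_sum]
    refine Finset.sum_le_sum fun x _ => Finset.sum_le_sum fun a _ => ?_
    rw [mul_left_comm, ← exp_add, ← mul_add]
    gcongr
    · exact (hp₀ x a).le
    · linarith [hbell x a]
  have hpos : ∀ W, 0 < ∑ x, ∑ a, p₀ x a * exp (η * bellmanError P r γ W Q x a) := fun W =>
    sum_pos (fun x _ => sum_pos (fun a _ => mul_pos (hp₀ x a) (exp_pos _)) univ_nonempty)
      univ_nonempty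
  have hlog := log_le_log (hpos V') hZ
  rw [log_mul (exp_pos _).ne' (hpos V).ne', log_exp] at hlog
  have hν : ∑ x, ν₀ x * V' x ≤ ∑ x, ν₀ x * V x + c := by
    calc ∑ x, ν₀ x * V' x ≤ ∑ x, ν₀ x * (V x + c) :=
          Finset.sum_le_sum fun x _ => mul_le_mul_of_nonneg_left (h x) (hν₀0 x)
      _ = ∑ x, ν₀ x * V x + c := by
          simp only [mul_add, Finset.sum_add_distrib, ← Finset.sum_mul, hν₀1, one_mul]
  have h1 := mul_le_mul_of_nonneg_left hlog (one_div_pos.2 hη).le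
  have h2 := mul_le_mul_of_nonneg_left hν (sub_nonneg.2 hγ1)
  have h3 : 1 / η * (η * (γ * c)) = γ * c := by field_simp
  simp only [logisticBellmanError]
  nlinarith

theorem lagrangian_softValue_le (hα : 0 < α) (hη : 0 < η) (hp₀ : ∀ x a, 0 < p₀ x a)
    (hp₀1 : ∑ x, ∑ a, p₀ x a = 1) (hπ₀ : ∀ x a, 0 < π₀ x a) {p d : X → A → ℝ}
    (hp : p ∈ probSimplex X A) (hd : ∀ x a, 0 ≤ d x a) (Q : X → A → ℝ) :
    lagrangian P r γ ν₀ α η p₀ π₀ (softValue α π₀ Q) Q p d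
      ≤ logisticBellmanError P r γ ν₀ η p₀ Q (softValue α π₀ Q) := by
  have hp' := sum_mul_sub_relEntropy_le hη hp₀ hp₀1 hp (bellmanError P r γ (softValue α π₀ Q) Q)
  have hd' := sum_mul_sub_condRelEntropy_le hα hπ₀ hd Q
  rw [lagrangian, logisticBellmanError]
  linarith

theorem exists_logisticBellmanError_le_lagrangian [Nonempty X] [Nonempty A]
    (hP0 : ∀ x a x', 0 ≤ P x a x') (hP1 : ∀ x a, ∑ x', P x a x' = 1) (hγ0 : 0 ≤ γ) (hγ1 : γ ≤ 1)
    (hν₀0 : ∀ x, 0 ≤ ν₀ x) (hν₀1 : ∑ x, ν₀ x = 1) (hα : 0 < α) (hη : 0 < η)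
    (hp₀ : ∀ x a, 0 < p₀ x a) (hp₀1 : ∑ x, ∑ a, p₀ x a = 1) (hπ₀ : ∀ x a, 0 < π₀ x a)
    (V : X → ℝ) (Q : X → A → ℝ) :
    ∃ p ∈ probSimplex X A, ∃ d ∈ probSimplex X A,
      logisticBellmanError P r γ ν₀ η p₀ Q (softValue α π₀ Q)
        ≤ lagrangian P r γ ν₀ α η p₀ π₀ V Q p d := by
  obtain ⟨x₀, -, hx₀⟩ := exists_max_image univ (fun x => softValue α π₀ Q x - V x) univ_nonempty
  obtain ⟨p, hp, hpeq⟩ := exists_sum_mul_sub_relEntropy_eq hη hp₀ hp₀1 (bellmanError P r γ V Q)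
  obtain ⟨d, hd, hdeq⟩ := exists_sum_mul_sub_condRelEntropy_eq hα hπ₀ Q V x₀
  refine ⟨p, hp, d, hd, ?_⟩
  calc logisticBellmanError P r γ ν₀ η p₀ Q (softValue α π₀ Q)
      ≤ logisticBellmanError P r γ ν₀ η p₀ Q V + (softValue α π₀ Q x₀ - V x₀) :=
        logisticBellmanError_le_add hP0 hP1 hγ0 hγ1 hν₀0 hν₀1 hη hp₀ Q fun x => by
          linarith [hx₀ x (mem_univ x)]
    _ = lagrangian P r γ ν₀ α η p₀ π₀ V Q p d := by
        rw [lagrangian, hpeq, logisticBellmanError]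
        linarith

theorem exists_isFeasible_self (hP0 : ∀ x a x', 0 ≤ P x a x') (hP1 : ∀ x a, ∑ x', P x a x' = 1)
    (hγ0 : 0 ≤ γ) (hγ1 : γ < 1) (hν₀0 : ∀ x, 0 ≤ ν₀ x) (hν₀1 : ∑ x, ν₀ x = 1)
    {ρ : X → A → ℝ} (hρ0 : ∀ x a, 0 ≤ ρ x a) (hρ1 : ∀ x, ∑ a, ρ x a = 1) :
    ∃ p, IsFeasible P γ ν₀ φ p p := by
  obtain ⟨μ, hμ0, hμ1, hμ⟩ := exists_discounted_stationary
    (M := Matrix.of fun x y => ∑ a, ρ y a * P y a x)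
    (fun x y => sum_nonneg fun a _ => mul_nonneg (hρ0 y a) (hP0 y a x))
    (fun y => by
      simp only [Matrix.of_apply]
      rw [Finset.sum_comm]
      simp [← Finset.mul_sum, hP1, hρ1])
    hγ0 hγ1 hν₀0 hν₀1
  have hrow : ∀ x, ∑ a, μ x * ρ x a = μ x := fun x => by rw [← Finset.mul_sum, hρ1, mul_one]
  have hnonneg : ∀ x a, 0 ≤ μ x * ρ x a := fun x a => mul_nonneg (hμ0 x) (hρ0 x a)
  refine ⟨fun x a => μ x * ρ x a, hnonneg, by simp only [hrow, hμ1], hnonneg,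
    by simp only [hrow, hμ1], fun x => ?_, fun i => rfl⟩
  rw [hrow]
  conv_lhs => rw [hμ]
  simp only [Pi.add_apply, Pi.smul_apply, smul_eq_mul, Matrix.mulVec, dotProduct, Matrix.of_apply,
    Finset.sum_mul]
  congr 2
  exact Finset.sum_congr rfl fun y _ => Finset.sum_congr rfl fun a _ => by ring

theorem objective_le_logisticBellmanError [Fintype ι] (hα : 0 < α) (hη : 0 < η)
    (hp₀ : ∀ x a, 0 < p₀ x a) (hp₀1 : ∑ x, ∑ a, p₀ x a = 1) (hπ₀ : ∀ x a, 0 < π₀ x a)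
    {p d : X → A → ℝ} (hpd : IsFeasible P γ ν₀ φ p d) (θ : ι → ℝ) :
    objective r α η p₀ π₀ p d
      ≤ logisticBellmanError P r γ ν₀ η p₀ (linearQ φ θ) (softValue α π₀ (linearQ φ θ)) := by
  obtain ⟨⟨hp, hd⟩, hR⟩ := isFeasible_iff.mp hpd
  have h := objective_add_sum_mul_constraint P r γ ν₀ φ α η p₀ π₀
    (Sum.elim (softValue α π₀ (linearQ φ θ)) θ) p d
  simp only [hR, sub_self, mul_zero, Finset.sum_const_zero, add_zero, Sum.elim_inl,
    Sum.elim_inr] at h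
  rw [h]
  exact lagrangian_softValue_le hα hη hp₀ hp₀1 hπ₀ hp hd.1 _

theorem exists_logisticBellmanError_lt [Nonempty X] [Nonempty A] [Fintype ι]
    (hP0 : ∀ x a x', 0 ≤ P x a x') (hP1 : ∀ x a, ∑ x', P x a x' = 1) (hγ0 : 0 ≤ γ) (hγ1 : γ < 1)
    (hν₀0 : ∀ x, 0 ≤ ν₀ x) (hν₀1 : ∑ x, ν₀ x = 1) (hα : 0 < α) (hη : 0 < η)
    (hp₀ : ∀ x a, 0 < p₀ x a) (hp₀1 : ∑ x, ∑ a, p₀ x a = 1) (hπ₀ : ∀ x a, 0 < π₀ x a)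
    (hfeas : ∃ p d, IsFeasible P γ ν₀ φ p d) {b : ℝ}
    (hb : ∀ p d, IsFeasible P γ ν₀ φ p d → objective r α η p₀ π₀ p d < b) :
    ∃ θ : ι → ℝ,
      logisticBellmanError P r γ ν₀ η p₀ (linearQ φ θ) (softValue α π₀ (linearQ φ θ)) < b := by
  classical
  obtain ⟨p, d, hpd⟩ := hfeas
  obtain ⟨ℓ, hℓ⟩ := exists_lagrangeMultiplier_of_concaveOn
    (isCompact_probSimplex.prod isCompact_probSimplex) (concaveOn_objective hα hη hp₀ hπ₀)
    (continuousOn_objective hp₀ hπ₀) (constraintMap P γ φ)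
    (LinearMap.continuous_of_finiteDimensional _) (constraintRhs γ ν₀)
    ⟨(p, d), isFeasible_iff.mp hpd⟩ fun pd hpd hR => hb pd.1 pd.2 (isFeasible_iff.mpr ⟨hpd, hR⟩)
  set μ : X ⊕ ι → ℝ := fun j => ℓ fun k => if j = k then 1 else 0
  have hℓμ : ∀ y, ℓ y = ∑ j, μ j * y j := fun y => by
    rw [← ContinuousLinearMap.coe_coe, LinearMap.pi_apply_eq_sum_univ]
    simp [μ, mul_comm]
  obtain ⟨p', hp', d', hd', hle⟩ := exists_logisticBellmanError_le_lagrangian hP0 hP1 hγ0 hγ1.le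
    hν₀0 hν₀1 hα hη hp₀ hp₀1 hπ₀ (fun x => μ (.inl x)) (linearQ φ fun i => μ (.inr i))
  refine ⟨fun i => μ (.inr i), hle.trans_lt ?_⟩
  rw [← objective_add_sum_mul_constraint]
  simpa [hℓμ] using hℓ (p', d') ⟨hp', hd'⟩

end QREPS

end

theorem stmt1_general {X A : Type*} [Fintype X] [Fintype A] [Nonempty X] [Nonempty A]
    {m : ℕ} (P : X → A → X → ℝ) (r : X → A → ℝ) (γ : ℝ) (ν₀ : X → ℝ)
    (φ : X → A → Fin m → ℝ) (α η : ℝ)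
    (p₀ d₀ : X → A → ℝ) (π₀ : X → A → ℝ)
    (hP0 : ∀ x a x', 0 ≤ P x a x') (hP1 : ∀ x a, ∑ x', P x a x' = 1)
    (hγ0 : 0 < γ) (hγ1 : γ < 1)
    (hν₀0 : ∀ x, 0 ≤ ν₀ x) (hν₀1 : ∑ x, ν₀ x = 1)
    (hα : 0 < α) (hη : 0 < η)
    (hp₀pos : ∀ x a, 0 < p₀ x a) (hp₀1 : ∑ x, ∑ a, p₀ x a = 1)
    (hd₀pos : ∀ x a, 0 < d₀ x a)
    (hπ₀ : ∀ x a, π₀ x a = d₀ x a / ∑ a', d₀ x a')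
    (Q : (Fin m → ℝ) → X → A → ℝ)
    (hQ : ∀ θ x a, Q θ x a = ∑ i, θ i * φ x a i)
    (V : (Fin m → ℝ) → X → ℝ)
    (hV : ∀ θ x, V θ x = (1 / α) * Real.log (∑ a, π₀ x a * Real.exp (α * Q θ x a)))
    (Δ : (Fin m → ℝ) → X → A → ℝ)
    (hΔ : ∀ θ x a, Δ θ x a = r x a + γ * (∑ x', P x a x' * V θ x') - Q θ x a)
    (G : (Fin m → ℝ) → ℝ)
    (hG : ∀ θ, G θ = (1 / η) * Real.log (∑ x, ∑ a, p₀ x a * Real.exp (η * Δ θ x a))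
        + (1 - γ) * ∑ x, ν₀ x * V θ x)
    (D : (X → A → ℝ) → (X → A → ℝ) → ℝ)
    (hD : ∀ p p', D p p' =
      ∑ x, ∑ a, (p x a * Real.log (p x a / p' x a) - p x a + p' x a))
    (Hc : (X → A → ℝ) → (X → A → ℝ) → ℝ)
    (hHc : ∀ d d', Hc d d' = ∑ x, ∑ a,
      d x a * Real.log ((d x a / ∑ a', d x a') / (d' x a / ∑ a', d' x a')))
    (J : (X → A → ℝ) → (X → A → ℝ) → ℝ)
    (hJ : ∀ p d, J p d =
      (∑ x, ∑ a, p x a * r x a) - (1 / η) * D p p₀ - (1 / α) * Hc d d₀)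
    (Feas : (X → A → ℝ) → (X → A → ℝ) → Prop)
    (hFeas : ∀ p d, Feas p d ↔
      ((∀ x a, 0 ≤ p x a) ∧ (∑ x, ∑ a, p x a) = 1 ∧
       (∀ x a, 0 ≤ d x a) ∧ (∑ x, ∑ a, d x a) = 1 ∧
       (∀ x, ∑ a, d x a =
          γ * (∑ x', ∑ a', P x' a' x * p x' a') + (1 - γ) * ν₀ x) ∧
       (∀ i, (∑ x, ∑ a, d x a * φ x a i) = ∑ x, ∑ a, p x a * φ x a i))) :
    sSup {v : ℝ | ∃ p d, Feas p d ∧ v = J p d} = sInf (Set.range G) := by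
  have hd₀row : ∀ x, 0 < ∑ a, d₀ x a := fun x => sum_pos (fun a _ => hd₀pos x a) univ_nonempty
  have hπ₀pos : ∀ x a, 0 < π₀ x a := fun x a => by
    rw [hπ₀]
    exact div_pos (hd₀pos x a) (hd₀row x)
  have hπ₀1 : ∀ x, ∑ a, π₀ x a = 1 := fun x => by
    simp only [hπ₀, ← Finset.sum_div, div_self (hd₀row x).ne']
  obtain rfl : Q = fun θ => QREPS.linearQ φ θ := funext fun θ => funext₂ (hQ θ)
  obtain rfl : V = fun θ => QREPS.softValue α π₀ (QREPS.linearQ φ θ) :=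
    funext fun θ => funext (hV θ)
  obtain rfl : G = fun θ => QREPS.logisticBellmanError P r γ ν₀ η p₀ (QREPS.linearQ φ θ)
      (QREPS.softValue α π₀ (QREPS.linearQ φ θ)) :=
    funext fun θ => by simp only [hG, hΔ, QREPS.logisticBellmanError, QREPS.bellmanError]
  obtain rfl : J = QREPS.objective r α η p₀ π₀ := by
    funext p d
    simp only [hJ, hD, hHc, ← hπ₀, QREPS.objective, QREPS.relEntropy, QREPS.condRelEntropy]
  obtain rfl : Feas = QREPS.IsFeasible P γ ν₀ φ := funext₂ fun p d => propext (hFeas p d)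
  obtain ⟨p, hp⟩ := QREPS.exists_isFeasible_self (φ := φ) hP0 hP1 hγ0.le hγ1 hν₀0 hν₀1
    (fun x a => (hπ₀pos x a).le) hπ₀1
  refine csSup_eq_csInf_of_forall_exists_lt ⟨_, p, p, hp, rfl⟩ (Set.range_nonempty _) ?_ ?_
  · rintro _ ⟨p, d, hpd, rfl⟩ _ ⟨θ, rfl⟩
    exact QREPS.objective_le_logisticBellmanError hα hη hp₀pos hp₀1 hπ₀pos hpd θ
  · intro b hb
    obtain ⟨θ, hθ⟩ := QREPS.exists_logisticBellmanError_lt hP0 hP1 hγ0.le hγ1 hν₀0 hν₀1 hα hη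
      hp₀pos hp₀1 hπ₀pos ⟨p, p, hp⟩ fun p d hpd => hb _ ⟨p, d, hpd, rfl⟩
    exact ⟨_, ⟨θ, rfl⟩, hθ⟩

/-- Strong duality for the Q-REPS optimization problem: the supremum of
⟨p,r⟩ − (1/η)·D(p‖p₀) − (1/α)·H(d‖d₀) over feasible pairs (p,d) of probability
distributions equals the infimum over θ ∈ ℝ^m of the logistic Bellman error G(θ). -/
theorem stmt1 {X A : Type*} [Fintype X] [Fintype A] [Nonempty X] [Nonempty A]
    {m : ℕ} (P : X → A → X → ℝ) (r : X → A → ℝ) (γ : ℝ) (ν₀ : X → ℝ)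
    (φ : X → A → Fin m → ℝ) (α η : ℝ)
    (p₀ d₀ : X → A → ℝ) (π₀ : X → A → ℝ)
    (hP0 : ∀ x a x', 0 ≤ P x a x') (hP1 : ∀ x a, ∑ x', P x a x' = 1)
    (hr : ∀ x a, 0 ≤ r x a ∧ r x a ≤ 1)
    (hγ0 : 0 < γ) (hγ1 : γ < 1)
    (hν₀0 : ∀ x, 0 ≤ ν₀ x) (hν₀1 : ∑ x, ν₀ x = 1)
    (hα : 0 < α) (hη : 0 < η)
    (hp₀pos : ∀ x a, 0 < p₀ x a) (hp₀1 : ∑ x, ∑ a, p₀ x a = 1)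
    (hd₀pos : ∀ x a, 0 < d₀ x a) (hd₀1 : ∑ x, ∑ a, d₀ x a = 1)
    (hπ₀ : ∀ x a, π₀ x a = d₀ x a / ∑ a', d₀ x a')
    (Q : (Fin m → ℝ) → X → A → ℝ)
    (hQ : ∀ θ x a, Q θ x a = ∑ i, θ i * φ x a i)
    (V : (Fin m → ℝ) → X → ℝ)
    (hV : ∀ θ x, V θ x = (1 / α) * Real.log (∑ a, π₀ x a * Real.exp (α * Q θ x a)))
    (Δ : (Fin m → ℝ) → X → A → ℝ)
    (hΔ : ∀ θ x a, Δ θ x a = r x a + γ * (∑ x', P x a x' * V θ x') - Q θ x a)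
    (G : (Fin m → ℝ) → ℝ)
    (hG : ∀ θ, G θ = (1 / η) * Real.log (∑ x, ∑ a, p₀ x a * Real.exp (η * Δ θ x a))
        + (1 - γ) * ∑ x, ν₀ x * V θ x)
    (D : (X → A → ℝ) → (X → A → ℝ) → ℝ)
    (hD : ∀ p p', D p p' =
      ∑ x, ∑ a, (p x a * Real.log (p x a / p' x a) - p x a + p' x a))
    (Hc : (X → A → ℝ) → (X → A → ℝ) → ℝ)
    (hHc : ∀ d d', Hc d d' = ∑ x, ∑ a,
      d x a * Real.log ((d x a / ∑ a', d x a') / (d' x a / ∑ a', d' x a')))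
    (J : (X → A → ℝ) → (X → A → ℝ) → ℝ)
    (hJ : ∀ p d, J p d =
      (∑ x, ∑ a, p x a * r x a) - (1 / η) * D p p₀ - (1 / α) * Hc d d₀)
    (Feas : (X → A → ℝ) → (X → A → ℝ) → Prop)
    (hFeas : ∀ p d, Feas p d ↔
      ((∀ x a, 0 ≤ p x a) ∧ (∑ x, ∑ a, p x a) = 1 ∧
       (∀ x a, 0 ≤ d x a) ∧ (∑ x, ∑ a, d x a) = 1 ∧
       (∀ x, ∑ a, d x a =
          γ * (∑ x', ∑ a', P x' a' x * p x' a') + (1 - γ) * ν₀ x) ∧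
       (∀ i, (∑ x, ∑ a, d x a * φ x a i) = ∑ x, ∑ a, p x a * φ x a i))) :
    sSup {v : ℝ | ∃ p d, Feas p d ∧ v = J p d} = sInf (Set.range G) :=
  stmt1_general P r γ ν₀ φ α η p₀ d₀ π₀ hP0 hP1 hγ0 hγ1 hν₀0 hν₀1 hα hη hp₀pos hp₀1 hd₀pos hπ₀ Q hQ
    V hV Δ hΔ G hG D hD Hc hHc J hJ Feas hFeas
end

section
/- The logistic Bellman error G : ℝ^m → ℝ, defined by G(θ) = (1/η)·log(Σ_{x,a} p₀(x,a)·e^{η·Δ_θ(x,a)}) + (1−γ)·Σ_x ν₀(x)·V_θ(x), is a convex function of θ. -/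
/-!
A weighted log-sum-exp `u ↦ log ∑ wᵢ exp uᵢ` with positive weights is convex and monotone, so it
preserves convexity of its arguments. Hence `V_θ(x)` is convex as a soft-max of the linear functions
`Q_θ(x, ·)`, `Δ_θ(x, a)` is convex as a constant plus a nonnegative combination of the `V_θ(x')`
minus a linear function, and `G` is a soft-max of the `Δ_θ` plus a nonnegative combination of the
`V_θ(x)`.
-/

open Real Set Finset

section
variable {𝕜 E ι α β : Type*} [Semiring 𝕜] [PartialOrder 𝕜] [AddCommMonoid E] [SMul 𝕜 E]
  [AddCommMonoid α] [PartialOrder α] [SMul 𝕜 α] [AddCommMonoid β] [PartialOrder β] [SMul 𝕜 β]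

theorem ConvexOn.pi {s : Set E} {F : E → ι → β} (hs : Convex 𝕜 s)
    (hF : ∀ i, ConvexOn 𝕜 s fun x => F x i) : ConvexOn 𝕜 s F :=
  ⟨hs, fun _ hx _ hy _ _ ha hb hab i => (hF i).2 hx hy ha hb hab⟩

theorem ConvexOn.comp_of_monotone {s : Set E} {f : E → β} {g : β → α}
    (hg : ConvexOn 𝕜 univ g) (hg' : Monotone g) (hf : ConvexOn 𝕜 s f) : ConvexOn 𝕜 s (g ∘ f) :=
  ⟨hf.1, fun _ hx _ hy _ _ ha hb hab =>
    (hg' (hf.2 hx hy ha hb hab)).trans (hg.2 (mem_univ _) (mem_univ _) ha hb hab)⟩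

end

theorem convexOn_sum_mul {n : Type*} [Fintype n] (v : n → ℝ) :
    ConvexOn ℝ univ fun θ : n → ℝ => ∑ i, θ i * v i :=
  ((dotProductBilin ℝ ℝ).flip v).convexOn convex_univ

theorem concaveOn_sum_mul {n : Type*} [Fintype n] (v : n → ℝ) :
    ConcaveOn ℝ univ fun θ : n → ℝ => ∑ i, θ i * v i :=
  ((dotProductBilin ℝ ℝ).flip v).concaveOn convex_univ

theorem ConvexOn.sum_mul {E ι : Type*} [AddCommGroup E] [Module ℝ E] {s : Set E}
    (hs : Convex ℝ s) (t : Finset ι) {c : ι → ℝ} (hc : ∀ i ∈ t, 0 ≤ c i) {f : ι → E → ℝ}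
    (hf : ∀ i ∈ t, ConvexOn ℝ s (f i)) : ConvexOn ℝ s fun x => ∑ i ∈ t, c i * f i x := by
  classical
  induction t using Finset.induction with
  | empty => simpa using convexOn_const (0 : ℝ) hs
  | insert i t hi ih =>
    simp only [Finset.sum_insert hi]
    exact ((hf i (mem_insert_self i t)).smul (hc i (mem_insert_self i t))).add
      (ih (fun j hj => hc j (mem_insert_of_mem hj)) fun j hj => hf j (mem_insert_of_mem hj))

section
variable {ι : Type*} [Fintype ι] [Nonempty ι] {w : ι → ℝ}

theorem sum_mul_exp_pos_s10 (hw : ∀ i, 0 < w i) (u : ι → ℝ) : 0 < ∑ i, w i * exp (u i) :=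
  Finset.sum_pos (fun i _ => mul_pos (hw i) (exp_pos _)) univ_nonempty

theorem sum_mul_exp_sub_log_sum_mul_exp (hw : ∀ i, 0 < w i) (u : ι → ℝ) :
    ∑ i, w i * exp (u i - log (∑ j, w j * exp (u j))) = 1 := by
  simp_rw [exp_sub, exp_log (sum_mul_exp_pos_s10 hw u), mul_div_assoc', ← Finset.sum_div]
  exact div_self (sum_mul_exp_pos_s10 hw u).ne'

theorem convexOn_log_sum_mul_exp (hw : ∀ i, 0 < w i) :
    ConvexOn ℝ univ fun u : ι → ℝ => log (∑ i, w i * exp (u i)) := by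
  refine ⟨convex_univ, fun u _ v _ a b ha hb hab => ?_⟩
  set Lu := log (∑ i, w i * exp (u i))
  set Lv := log (∑ i, w i * exp (v i))
  simp only [smul_eq_mul, Pi.add_apply, Pi.smul_apply]
  rw [log_le_iff_le_exp (sum_mul_exp_pos_s10 hw _)]
  -- After subtracting the normalisers `Lu`, `Lv` the weights `wᵢ exp (uᵢ - Lu)` sum to `1`, so
  -- convexity of `exp` applied termwise suffices.
  calc ∑ i, w i * exp (a * u i + b * v i)
      = ∑ i, w i * exp (a * (u i - Lu) + b * (v i - Lv)) * exp (a * Lu + b * Lv) := by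
        congr 1 with i; rw [mul_assoc, ← exp_add]; ring_nf
    _ ≤ ∑ i, w i * (a * exp (u i - Lu) + b * exp (v i - Lv)) * exp (a * Lu + b * Lv) := by
        gcongr with i
        · exact (hw i).le
        · simpa using convexOn_exp.2 (mem_univ (u i - Lu)) (mem_univ (v i - Lv)) ha hb hab
    _ = (a * ∑ i, w i * exp (u i - Lu) + b * ∑ i, w i * exp (v i - Lv)) *
          exp (a * Lu + b * Lv) := by
        rw [Finset.mul_sum, Finset.mul_sum, ← Finset.sum_add_distrib, Finset.sum_mul]
        exact Finset.sum_congr rfl fun i _ => by ring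
    _ = exp (a * Lu + b * Lv) := by
        rw [sum_mul_exp_sub_log_sum_mul_exp hw, sum_mul_exp_sub_log_sum_mul_exp hw, mul_one,
          mul_one, hab, one_mul]

theorem monotone_log_sum_mul_exp (hw : ∀ i, 0 < w i) :
    Monotone fun u : ι → ℝ => log (∑ i, w i * exp (u i)) := fun u _ huv =>
  log_le_log (sum_mul_exp_pos_s10 hw u) <|
    Finset.sum_le_sum fun i _ => mul_le_mul_of_nonneg_left (exp_le_exp.2 (huv i)) (hw i).le

theorem ConvexOn.log_sum_mul_exp {E : Type*} [AddCommGroup E] [Module ℝ E] {s : Set E}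
    (hw : ∀ i, 0 < w i) {f : ι → E → ℝ} (hf : ∀ i, ConvexOn ℝ s (f i)) {c : ℝ} (hc : 0 < c) :
    ConvexOn ℝ s fun x => (1 / c) * log (∑ i, w i * exp (c * f i x)) := by
  have hcf : ConvexOn ℝ s fun x i => c * f i x :=
    .pi (hf (Classical.arbitrary ι)).1 fun i => (hf i).smul hc.le
  exact ((convexOn_log_sum_mul_exp hw).comp_of_monotone (monotone_log_sum_mul_exp hw) hcf).smul
    (one_div_pos.2 hc).le
end

theorem stmt10_general {X A : Type*} [Fintype X] [Fintype A] [Nonempty X] [Nonempty A]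
    {m : ℕ} (P : X → A → X → ℝ) (r : X → A → ℝ) (γ : ℝ) (ν₀ : X → ℝ)
    (φ : X → A → Fin m → ℝ) (α η : ℝ)
    (p₀ : X → A → ℝ) (π₀ : X → A → ℝ)
    (hP0 : ∀ x a x', 0 ≤ P x a x')
    (hγ0 : 0 < γ) (hγ1 : γ < 1)
    (hν₀0 : ∀ x, 0 ≤ ν₀ x)
    (hα : 0 < α) (hη : 0 < η)
    (hp₀pos : ∀ x a, 0 < p₀ x a)
    (hπ₀pos : ∀ x a, 0 < π₀ x a)
    (Q : (Fin m → ℝ) → X → A → ℝ)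
    (hQ : ∀ θ x a, Q θ x a = ∑ i, θ i * φ x a i)
    (V : (Fin m → ℝ) → X → ℝ)
    (hV : ∀ θ x, V θ x = (1 / α) * Real.log (∑ a, π₀ x a * Real.exp (α * Q θ x a)))
    (Δ : (Fin m → ℝ) → X → A → ℝ)
    (hΔ : ∀ θ x a, Δ θ x a = r x a + γ * (∑ x', P x a x' * V θ x') - Q θ x a)
    (G : (Fin m → ℝ) → ℝ)
    (hG : ∀ θ, G θ = (1 / η) * Real.log (∑ x, ∑ a, p₀ x a * Real.exp (η * Δ θ x a))
        + (1 - γ) * ∑ x, ν₀ x * V θ x) :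
    ConvexOn ℝ Set.univ G := by
  have hQ_convex : ∀ x a, ConvexOn ℝ univ fun θ => Q θ x a := fun x a => by
    simpa only [hQ] using convexOn_sum_mul (φ x a)
  have hQ_concave : ∀ x a, ConcaveOn ℝ univ fun θ => Q θ x a := fun x a => by
    simpa only [hQ] using concaveOn_sum_mul (φ x a)
  have hV_convex : ∀ x, ConvexOn ℝ univ fun θ => V θ x := fun x => by
    simpa only [hV] using ConvexOn.log_sum_mul_exp (hπ₀pos x) (hQ_convex x) hα
  have hΔ_convex : ∀ x a, ConvexOn ℝ univ fun θ => Δ θ x a := fun x a => by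
    simp only [hΔ, sub_eq_add_neg, Finset.mul_sum, ← mul_assoc]
    exact ((convexOn_const _ convex_univ).add (ConvexOn.sum_mul convex_univ univ
      (fun x' _ => mul_nonneg hγ0.le (hP0 x a x')) fun x' _ => hV_convex x')).add
      (hQ_concave x a).neg
  have hG_eq : G = fun θ => (1 / η) * log (∑ p : X × A, p₀ p.1 p.2 * exp (η * Δ θ p.1 p.2))
      + ∑ x, ((1 - γ) * ν₀ x) * V θ x := by
    funext θ
    rw [hG, Fintype.sum_prod_type' fun x a => p₀ x a * exp (η * Δ θ x a), Finset.mul_sum]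
    simp only [mul_assoc]
  rw [hG_eq]
  exact (ConvexOn.log_sum_mul_exp (fun p : X × A => hp₀pos p.1 p.2)
      (fun p => hΔ_convex p.1 p.2) hη).add
    (ConvexOn.sum_mul convex_univ univ (fun x _ => mul_nonneg (by linarith) (hν₀0 x))
      fun x _ => hV_convex x)

/-- The logistic Bellman error
G(θ) = (1/η)·log(Σ_{x,a} p₀(x,a)·e^{η·Δ_θ(x,a)}) + (1−γ)·Σ_x ν₀(x)·V_θ(x)
is a convex function of θ ∈ ℝ^m. -/
theorem stmt10 {X A : Type*} [Fintype X] [Fintype A] [Nonempty X] [Nonempty A]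
    {m : ℕ} (P : X → A → X → ℝ) (r : X → A → ℝ) (γ : ℝ) (ν₀ : X → ℝ)
    (φ : X → A → Fin m → ℝ) (α η : ℝ)
    (p₀ : X → A → ℝ) (π₀ : X → A → ℝ)
    (hP0 : ∀ x a x', 0 ≤ P x a x') (hP1 : ∀ x a, ∑ x', P x a x' = 1)
    (hr : ∀ x a, 0 ≤ r x a ∧ r x a ≤ 1)
    (hγ0 : 0 < γ) (hγ1 : γ < 1)
    (hν₀0 : ∀ x, 0 ≤ ν₀ x) (hν₀1 : ∑ x, ν₀ x = 1)
    (hα : 0 < α) (hη : 0 < η)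
    (hp₀pos : ∀ x a, 0 < p₀ x a) (hp₀1 : ∑ x, ∑ a, p₀ x a = 1)
    (hπ₀pos : ∀ x a, 0 < π₀ x a) (hπ₀1 : ∀ x, ∑ a, π₀ x a = 1)
    (Q : (Fin m → ℝ) → X → A → ℝ)
    (hQ : ∀ θ x a, Q θ x a = ∑ i, θ i * φ x a i)
    (V : (Fin m → ℝ) → X → ℝ)
    (hV : ∀ θ x, V θ x = (1 / α) * Real.log (∑ a, π₀ x a * Real.exp (α * Q θ x a)))
    (Δ : (Fin m → ℝ) → X → A → ℝ)
    (hΔ : ∀ θ x a, Δ θ x a = r x a + γ * (∑ x', P x a x' * V θ x') - Q θ x a)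
    (G : (Fin m → ℝ) → ℝ)
    (hG : ∀ θ, G θ = (1 / η) * Real.log (∑ x, ∑ a, p₀ x a * Real.exp (η * Δ θ x a))
        + (1 - γ) * ∑ x, ν₀ x * V θ x) :
    ConvexOn ℝ Set.univ G :=
  stmt10_general P r γ ν₀ φ α η p₀ π₀ hP0 hγ0 hγ1 hν₀0 hα hη hp₀pos hπ₀pos Q hQ V hV Δ hΔ G hG
end
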